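/- arXiv:1404.2692 — 2 statements merged into one kernel-verified Lean document; each statement's English description precedes it below -/
import Mathlib

section
/- For $0 < p < \infty$, $0 < \lambda < n$, any nonnegative measurable function $\phi$ on $\mathbb{R}^n$, and any $f \in L^{p,\lambda}(\mathbb{R}^n)$, one has $\int_{\mathbb{R}^n} |f(x)|^p \phi(x)\,dx \le \|f\|_{L^{p,\lambda}}^p \int_{\mathbb{R}^n} \phi\,dH^{\lambda}$, where the right-hand integral is the Choquet integral of $\phi$ with respect to Hausdorff content. -/
open MeasureTheory ENNReal Set

noncomputable section

/-- Axis-parallel cube with lower corner `c` and side length `h`. -/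
def Cube (n : ℕ) (c : Fin n → ℝ) (h : ℝ) : Set (Fin n → ℝ) :=
  {x | ∀ i, c i ≤ x i ∧ x i ≤ c i + h}

/-- `λ`-dimensional Hausdorff content, via countable coverings by cubes. -/
def hausdorffContent (n : ℕ) (lam : ℝ) (E : Set (Fin n → ℝ)) : ℝ≥0∞ :=
  ⨅ (c : ℕ → Fin n → ℝ) (h : ℕ → ℝ) (_ : ∀ j, 0 < h j)
    (_ : E ⊆ ⋃ j, Cube n (c j) (h j)), ∑' j, ENNReal.ofReal (h j) ^ lam

/-- Choquet integral of an `ℝ≥0∞`-valued function against the Hausdorff content `H^λ`. -/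
def choquetE (n : ℕ) (lam : ℝ) (φ : (Fin n → ℝ) → ℝ≥0∞) : ℝ≥0∞ :=
  ∫⁻ t in Set.Ioi (0:ℝ), hausdorffContent n lam {y | ENNReal.ofReal t < φ y}

/-- Choquet integral of a real-valued function against the Hausdorff content `H^λ`. -/
def choquet (n : ℕ) (lam : ℝ) (φ : (Fin n → ℝ) → ℝ) : ℝ≥0∞ :=
  ∫⁻ t in Set.Ioi (0:ℝ), hausdorffContent n lam {y | t < φ y}

/-- The Morrey norm `‖f‖_{L^{p,λ}}`. -/
def morreyNorm (n : ℕ) (p lam : ℝ) (f : (Fin n → ℝ) → ℝ) : ℝ≥0∞ :=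
  ⨆ (c : Fin n → ℝ) (h : ℝ) (_ : 0 < h),
    ((∫⁻ x in Cube n c h, ENNReal.ofReal |f x| ^ p) / ENNReal.ofReal h ^ lam) ^ (1/p)

/-- The weighted Morrey norm of an `ℝ≥0∞`-valued function. -/
def morreyNormWE (n : ℕ) (p lam : ℝ) (w : (Fin n → ℝ) → ℝ) (f : (Fin n → ℝ) → ℝ≥0∞) : ℝ≥0∞ :=
  ⨆ (c : Fin n → ℝ) (h : ℝ) (_ : 0 < h),
    ((∫⁻ x in Cube n c h, f x ^ p * ENNReal.ofReal (w x)) / ENNReal.ofReal h ^ lam) ^ (1/p)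

/-- The weighted Morrey norm `‖f‖_{L^{p,λ}(w)}`. -/
def morreyNormW (n : ℕ) (p lam : ℝ) (w f : (Fin n → ℝ) → ℝ) : ℝ≥0∞ :=
  morreyNormWE n p lam w (fun x => ENNReal.ofReal |f x|)

/-- The Hardy–Littlewood maximal operator (over axis-parallel cubes). -/
def maximalFn (n : ℕ) (f : (Fin n → ℝ) → ℝ) (x : Fin n → ℝ) : ℝ≥0∞ :=
  ⨆ (c : Fin n → ℝ) (h : ℝ) (_ : 0 < h) (_ : x ∈ Cube n c h),
    (∫⁻ y in Cube n c h, ENNReal.ofReal |f y|) / ENNReal.ofReal (h ^ n)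

/-- A weight: a nonnegative locally integrable function positive on a set of positive measure. -/
def IsWeight (n : ℕ) (w : (Fin n → ℝ) → ℝ) : Prop :=
  Measurable w ∧ (∀ x, 0 ≤ w x) ∧ LocallyIntegrable w volume ∧ 0 < volume {x | 0 < w x}

/-- Muckenhoupt `A₁` weight with constant `C`. -/
def IsA1 (n : ℕ) (C : ℝ≥0∞) (w : (Fin n → ℝ) → ℝ) : Prop :=
  IsWeight n w ∧ ∀ᵐ x ∂(volume : Measure (Fin n → ℝ)), maximalFn n w x ≤ C * ENNReal.ofReal (w x)

/-- The basis `𝓑_λ`: `A₁` weights with Choquet integral against `H^λ` at most one. -/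
def MorreyBasis (n : ℕ) (lam : ℝ) : Set ((Fin n → ℝ) → ℝ) :=
  {b | (∃ C : ℝ≥0∞, C ≠ ⊤ ∧ IsA1 n C b) ∧ choquet n lam b ≤ 1}

/-- The norm of the space `H^{q,λ}`; note `b^{-q/q'} = b^{-(q-1)}`. -/
def hNorm (n : ℕ) (q lam : ℝ) (g : (Fin n → ℝ) → ℝ) : ℝ≥0∞ :=
  ⨅ (b : (Fin n → ℝ) → ℝ) (_ : b ∈ MorreyBasis n lam),
    (∫⁻ x, ENNReal.ofReal |g x| ^ q * ENNReal.ofReal (b x) ^ (-(q - 1))) ^ (1/q)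
/-- Euclidean norm on `Fin n → ℝ`. -/
def euclidNorm (n : ℕ) (x : Fin n → ℝ) : ℝ := Real.sqrt (∑ i, x i ^ 2)

/-- A `(p,λ)`-atom: supported in a cube `Q` with `‖a‖_{L^p} ≤ l(Q)^{-λ/p'}`. -/
def IsPLAtom (n : ℕ) (p lam : ℝ) (a : (Fin n → ℝ) → ℝ) : Prop :=
  Measurable a ∧ ∃ (c : Fin n → ℝ) (h : ℝ), 0 < h ∧ (∀ x ∉ Cube n c h, a x = 0) ∧
    (∫⁻ x, ENNReal.ofReal |a x| ^ p) ^ (1/p) ≤ ENNReal.ofReal h ^ (-(lam * (p - 1) / p))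

/-- The block space norm `‖f‖_{B^{p,λ}}`. -/
def blockNorm (n : ℕ) (p lam : ℝ) (f : (Fin n → ℝ) → ℝ) : ℝ≥0∞ :=
  ⨅ (cs : ℕ → ℝ) (a : ℕ → (Fin n → ℝ) → ℝ) (_ : ∀ k, IsPLAtom n p lam (a k))
    (_ : ∀ x, HasSum (fun k => cs k * a k x) (f x)),
    ∑' k, ENNReal.ofReal |cs k|

/-- The dyadic cube `2^{-k}(m + [0,1)^n)`. -/
def DCube (n : ℕ) (k : ℤ) (m : Fin n → ℤ) : Set (Fin n → ℝ) :=
  {x | ∀ i, (m i : ℝ) * (2:ℝ) ^ (-k) ≤ x i ∧ x i < ((m i : ℝ) + 1) * (2:ℝ) ^ (-k)}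

/-- The dyadic maximal operator with respect to a measure `μ`. -/
def dyadicMaximal (n : ℕ) (μ : Measure (Fin n → ℝ)) (f : (Fin n → ℝ) → ℝ)
    (x : Fin n → ℝ) : ℝ≥0∞ :=
  ⨆ (k : ℤ) (m : Fin n → ℤ) (_ : x ∈ DCube n k m),
    (∫⁻ y in DCube n k m, ENNReal.ofReal |f y| ∂μ) / μ (DCube n k m)

/-- The `L^p(μ)`-norm (with `p ∈ (0,∞]`) of an `ℝ≥0∞`-valued function. -/
def lpNormE {α : Type*} [MeasurableSpace α] (μ : Measure α) (p : ℝ≥0∞) (g : α → ℝ≥0∞) : ℝ≥0∞ :=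
  if p = ⊤ then essSup g μ else (∫⁻ x, g x ^ p.toReal ∂μ) ^ (1 / p.toReal)

/-- Content normalized on balls: the infimum of `ρ^λ` over balls `{|x| < ρ}` containing `E`. -/
def ballContent (n : ℕ) (lam : ℝ) (E : Set (Fin n → ℝ)) : ℝ≥0∞ :=
  ⨅ (ρ : ℝ) (_ : 0 ≤ ρ) (_ : E ⊆ {x | euclidNorm n x < ρ}), ENNReal.ofReal ρ ^ lam

/-- Choquet integral against the ball-normalized content. -/
def ballChoquet (n : ℕ) (lam : ℝ) (φ : (Fin n → ℝ) → ℝ) : ℝ≥0∞ :=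
  ∫⁻ t in Set.Ioi (0:ℝ), ballContent n lam {y | t < φ y}

/-- The `μ`-average of `g` over a dyadic cube (indexed by a pair `(k,m)`). -/
def dAvg (n : ℕ) (μ : Measure (Fin n → ℝ)) (g : (Fin n → ℝ) → ℝ)
    (Q : ℤ × (Fin n → ℤ)) : ℝ≥0∞ :=
  (∫⁻ y in DCube n Q.1 Q.2, ENNReal.ofReal (g y) ∂μ) / μ (DCube n Q.1 Q.2)

/-- `Q` is a stopping child of `F`: a maximal dyadic cube inside `F` whose `μ`-average of `g`
exceeds twice that of `F`. -/
def IsPChild (n : ℕ) (μ : Measure (Fin n → ℝ)) (g : (Fin n → ℝ) → ℝ)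
    (F Q : ℤ × (Fin n → ℤ)) : Prop :=
  DCube n Q.1 Q.2 ⊆ DCube n F.1 F.2 ∧ 2 * dAvg n μ g F < dAvg n μ g Q ∧
    ∀ Q' : ℤ × (Fin n → ℤ), DCube n Q.1 Q.2 ⊆ DCube n Q'.1 Q'.2 →
      DCube n Q'.1 Q'.2 ⊆ DCube n F.1 F.2 → 2 * dAvg n μ g F < dAvg n μ g Q' →
      DCube n Q'.1 Q'.2 = DCube n Q.1 Q.2

/-- The collection of principal cubes generated from `Q0`. -/
inductive Principal (n : ℕ) (μ : Measure (Fin n → ℝ)) (g : (Fin n → ℝ) → ℝ)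
    (Q0 : ℤ × (Fin n → ℤ)) : ℤ × (Fin n → ℤ) → Prop
  | base : Principal n μ g Q0 Q0
  | child (F Q : ℤ × (Fin n → ℤ)) : Principal n μ g Q0 F → IsPChild n μ g F Q →
      Principal n μ g Q0 Q

/-- The set `E_𝓕(F) = F \ ⋃_{F' ∈ ch_𝓕(F)} F'`. -/
def PrincipalRest (n : ℕ) (μ : Measure (Fin n → ℝ)) (g : (Fin n → ℝ) → ℝ)
    (F : ℤ × (Fin n → ℤ)) : Set (Fin n → ℝ) :=
  DCube n F.1 F.2 \ ⋃ (Q : ℤ × (Fin n → ℤ)) (_ : IsPChild n μ g F Q), DCube n Q.1 Q.2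


/-!
On a single cube `Q` of side `h` the definition of the Morrey norm gives
`∫_Q |f|^p ≤ ‖f‖^p h^λ`; summing over a countable cover by cubes and taking the infimum shows
that the measure `|f|^p dx` is dominated by `‖f‖^p H^λ` on every set. Integrating this
domination over the superlevel sets `{φ > t}` (layer cake) gives the inequality.
-/

lemma univ_subset_iUnion_cube (n : ℕ) :
    (univ : Set (Fin n → ℝ)) ⊆ ⋃ j : ℕ, Cube n (fun _ => -(j : ℝ)) (2 * j + 1) := by
  intro x _
  obtain ⟨N, hN⟩ := exists_nat_ge ‖x‖
  refine mem_iUnion.2 ⟨N, fun i => ?_⟩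
  have hxi := abs_le.1 ((norm_le_pi_norm x i).trans hN)
  constructor <;> linarith [hxi.1, hxi.2]

section MorreyDomination

variable {n : ℕ} {p lam : ℝ} {f : (Fin n → ℝ) → ℝ}

lemma setLIntegral_cube_le_morreyNorm_rpow_mul (hp : 0 < p) (c : Fin n → ℝ) {h : ℝ}
    (hh : 0 < h) :
    ∫⁻ x in Cube n c h, ENNReal.ofReal |f x| ^ p ≤
      morreyNorm n p lam f ^ p * ENNReal.ofReal h ^ lam := by
  have hle : ((∫⁻ x in Cube n c h, ENNReal.ofReal |f x| ^ p) / ENNReal.ofReal h ^ lam) ^ p⁻¹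
      ≤ morreyNorm n p lam f := by
    rw [← one_div]
    exact le_iSup_of_le c (le_iSup_of_le h (le_iSup_of_le hh le_rfl))
  have hh₀ : ENNReal.ofReal h ≠ 0 := (ENNReal.ofReal_pos.2 hh).ne'
  rwa [ENNReal.rpow_inv_le_iff hp, ENNReal.div_le_iff
    (ENNReal.rpow_pos (pos_iff_ne_zero.2 hh₀) ofReal_ne_top).ne'
    (ENNReal.rpow_ne_top_of_ne_zero hh₀ ofReal_ne_top)] at hle

lemma setLIntegral_le_morreyNorm_rpow_mul_tsum (hp : 0 < p) {E : Set (Fin n → ℝ)}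
    (c : ℕ → Fin n → ℝ) (h : ℕ → ℝ) (hpos : ∀ j, 0 < h j)
    (hcov : E ⊆ ⋃ j, Cube n (c j) (h j)) :
    ∫⁻ x in E, ENNReal.ofReal |f x| ^ p ≤
      morreyNorm n p lam f ^ p * ∑' j, ENNReal.ofReal (h j) ^ lam :=
  calc ∫⁻ x in E, ENNReal.ofReal |f x| ^ p
      ≤ ∫⁻ x in ⋃ j, Cube n (c j) (h j), ENNReal.ofReal |f x| ^ p := lintegral_mono_set hcov
    _ ≤ ∑' j, ∫⁻ x in Cube n (c j) (h j), ENNReal.ofReal |f x| ^ p :=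
        lintegral_iUnion_le _ _
    _ ≤ ∑' j, morreyNorm n p lam f ^ p * ENNReal.ofReal (h j) ^ lam :=
        ENNReal.tsum_le_tsum fun j => setLIntegral_cube_le_morreyNorm_rpow_mul hp (c j) (hpos j)
    _ = morreyNorm n p lam f ^ p * ∑' j, ENNReal.ofReal (h j) ^ lam := ENNReal.tsum_mul_left

lemma setLIntegral_le_morreyNorm_rpow_mul_hausdorffContent (hp : 0 < p)
    (hfM : morreyNorm n p lam f ≠ ⊤) (E : Set (Fin n → ℝ)) :
    ∫⁻ x in E, ENNReal.ofReal |f x| ^ p ≤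
      morreyNorm n p lam f ^ p * hausdorffContent n lam E := by
  by_cases hM₀ : morreyNorm n p lam f ^ p = 0
  · -- `0 * ⊤ = 0`, so we need `∫_E |f|^p = 0` even when `E` has infinite content: cover the
    -- whole space by cubes.
    have hcov := (subset_univ E).trans (univ_subset_iUnion_cube n)
    simpa [hM₀] using setLIntegral_le_morreyNorm_rpow_mul_tsum (lam := lam) (f := f) hp _ _
      (fun j => by positivity) hcov
  · have hM_top : morreyNorm n p lam f ^ p ≠ ⊤ := ENNReal.rpow_ne_top_of_nonneg hp.le hfM
    rw [← ENNReal.div_le_iff' hM₀ hM_top]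
    exact le_iInf fun c => le_iInf fun h => le_iInf fun hpos => le_iInf fun hcov =>
      (ENNReal.div_le_iff' hM₀ hM_top).2
        (setLIntegral_le_morreyNorm_rpow_mul_tsum hp c h hpos hcov)

end MorreyDomination

lemma lintegral_le_mul_choquet {n : ℕ} {lam : ℝ} {ν : Measure (Fin n → ℝ)} {K : ℝ≥0∞}
    (hK : K ≠ ⊤) (hν : ∀ E, ν E ≤ K * hausdorffContent n lam E)
    {φ : (Fin n → ℝ) → ℝ} (hφm : Measurable φ) (hφ : ∀ x, 0 ≤ φ x) :
    ∫⁻ x, ENNReal.ofReal (φ x) ∂ν ≤ K * choquet n lam φ :=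
  calc ∫⁻ x, ENNReal.ofReal (φ x) ∂ν = ∫⁻ t in Ioi (0 : ℝ), ν {x | t < φ x} :=
        lintegral_eq_lintegral_meas_lt ν (ae_of_all _ hφ) hφm.aemeasurable
    _ ≤ ∫⁻ t in Ioi (0 : ℝ), K * hausdorffContent n lam {x | t < φ x} :=
        lintegral_mono fun _ => hν _
    _ = K * choquet n lam φ := lintegral_const_mul' _ _ hK

theorem morrey_le_choquet_general (n : ℕ) (p lam : ℝ) (hp : 0 < p)
    (f : (Fin n → ℝ) → ℝ) (hf : Measurable f) (hfM : morreyNorm n p lam f ≠ ⊤)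
    (φ : (Fin n → ℝ) → ℝ) (hφm : Measurable φ) (hφ : ∀ x, 0 ≤ φ x) :
    ∫⁻ x, ENNReal.ofReal |f x| ^ p * ENNReal.ofReal (φ x) ≤
      morreyNorm n p lam f ^ p * choquet n lam φ := by
  set g : (Fin n → ℝ) → ℝ≥0∞ := fun x => ENNReal.ofReal |f x| ^ p
  have hgm : Measurable g := (ENNReal.measurable_ofReal.comp hf.abs).pow_const p
  calc ∫⁻ x, g x * ENNReal.ofReal (φ x)
      = ∫⁻ x, ENNReal.ofReal (φ x) ∂(volume.withDensity g) :=
        (lintegral_withDensity_eq_lintegral_mul _ hgm hφm.ennreal_ofReal).symm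
    _ ≤ morreyNorm n p lam f ^ p * choquet n lam φ :=
        lintegral_le_mul_choquet (ENNReal.rpow_ne_top_of_nonneg hp.le hfM)
          (fun E => (withDensity_apply' g E).trans_le
            (setLIntegral_le_morreyNorm_rpow_mul_hausdorffContent hp hfM E))
          hφm hφ

/-- `∫ |f|^p φ dx ≤ ‖f‖_{L^{p,λ}}^p ∫ φ dH^λ` (Choquet integral). -/
theorem morrey_le_choquet (n : ℕ) (p lam : ℝ) (hp : 0 < p) (hlam : 0 < lam) (hlamn : lam < n)
    (f : (Fin n → ℝ) → ℝ) (hf : Measurable f) (hfM : morreyNorm n p lam f ≠ ⊤)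
    (φ : (Fin n → ℝ) → ℝ) (hφm : Measurable φ) (hφ : ∀ x, 0 ≤ φ x) :
    ∫⁻ x, ENNReal.ofReal |f x| ^ p * ENNReal.ofReal (φ x) ≤
      morreyNorm n p lam f ^ p * choquet n lam φ :=
  morrey_le_choquet_general n p lam hp f hf hfM φ hφm hφ
end
end

section
/- Let $0 < \alpha < n$ and $p > \alpha/n$. There is a constant $C$ depending only on $\alpha$, $n$, $p$ such that for every axis-parallel cube $Q$, the Choquet integral of $(M 1_Q)^p$ with respect to $H^{\alpha}$ satisfies $\int_{\mathbb{R}^n} M[1_Q]^p\,dH^{\alpha} \le C\, l(Q)^{\alpha}$, where $M$ is the Hardy-Littlewood maximal operator. -/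
open MeasureTheory ENNReal Set

noncomputable section

/-! Every cube on which `1_Q` has average above `s` meets `Q` and has side below
`l(Q) s^{-1/n}`, so `{M 1_Q > s}` lies in a cube of side `≤ 3 l(Q) s^{-1/n}` for `s ≤ 1`, and it
is empty for `s ≥ 1`. Hence `H^α({(M 1_Q)^p > t}) ≲ l(Q)^α t^{-α/(np)}` on `(0, 1)` and vanishes
beyond, and `t^{-α/(np)}` is integrable on `(0, 1)` exactly because `p > α/n`. -/

lemma cube_eq_pi (n : ℕ) (c : Fin n → ℝ) (h : ℝ) :
    Cube n c h = Set.pi univ fun i => Icc (c i) (c i + h) := by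
  ext x; simp [Cube, Pi.le_def, forall_and]

lemma measurableSet_cube (n : ℕ) (c : Fin n → ℝ) (h : ℝ) : MeasurableSet (Cube n c h) := by
  rw [cube_eq_pi]; exact MeasurableSet.univ_pi fun _ => measurableSet_Icc

lemma volume_cube (n : ℕ) (c : Fin n → ℝ) {h : ℝ} (hh : 0 ≤ h) :
    volume (Cube n c h) = ENNReal.ofReal (h ^ n) := by
  rw [cube_eq_pi, volume_pi_pi]
  simp [ENNReal.ofReal_pow hh]

lemma hausdorffContent_le_tsum {n : ℕ} {α : ℝ} {E : Set (Fin n → ℝ)} {c : ℕ → Fin n → ℝ}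
    {h : ℕ → ℝ} (hpos : ∀ j, 0 < h j) (hE : E ⊆ ⋃ j, Cube n (c j) (h j)) :
    hausdorffContent n α E ≤ ∑' j, ENNReal.ofReal (h j) ^ α :=
  iInf₂_le_of_le c h <| iInf₂_le_of_le hpos hE le_rfl

lemma hausdorffContent_le_of_subset_cube {n : ℕ} {α : ℝ} (hα : 0 < α) {E : Set (Fin n → ℝ)}
    {c : Fin n → ℝ} {H : ℝ} (hH : 0 < H) (hE : E ⊆ Cube n c H) :
    hausdorffContent n α E ≤ ENNReal.ofReal H ^ α := by
  refine ENNReal.le_of_forall_pos_le_add fun ε hε _ => ?_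
  obtain ⟨δ, hδ, hδε⟩ := ENNReal.exists_pos_sum_of_countable
    (ENNReal.coe_ne_zero.2 hε.ne') ℕ
  -- the cube itself, padded by cubes whose `α`-th powers of sides sum to less than `ε`
  set h : ℕ → ℝ := fun j => if j = 0 then H else (δ j : ℝ) ^ α⁻¹
  have hpos : ∀ j, 0 < h j := fun j => by
    unfold h; split_ifs
    exacts [hH, Real.rpow_pos_of_pos (hδ j) _]
  have hterm : ∀ j,
      ENNReal.ofReal (h j) ^ α ≤ (if j = 0 then ENNReal.ofReal H ^ α else 0) + δ j := by
    intro j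
    unfold h; split_ifs
    · exact le_self_add
    · rw [zero_add, ← ENNReal.ofReal_rpow_of_pos (NNReal.coe_pos.2 (hδ j)), ← ENNReal.rpow_mul,
        inv_mul_cancel₀ hα.ne', ENNReal.rpow_one, ENNReal.ofReal_coe_nnreal]
  calc hausdorffContent n α E
      ≤ ∑' j, ENNReal.ofReal (h j) ^ α :=
        hausdorffContent_le_tsum (c := fun _ => c) hpos
          (hE.trans (subset_iUnion_of_subset 0 (by simp [h])))
    _ ≤ ∑' j, ((if j = 0 then ENNReal.ofReal H ^ α else 0) + δ j) := ENNReal.tsum_le_tsum hterm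
    _ ≤ ENNReal.ofReal H ^ α + ε := by
        rw [ENNReal.tsum_add, tsum_ite_eq]
        gcongr

lemma hausdorffContent_empty (n : ℕ) {α : ℝ} (hα : 0 < α) :
    hausdorffContent n α (∅ : Set (Fin n → ℝ)) = 0 := by
  refine le_antisymm (ENNReal.le_of_forall_pos_le_add fun ε hε _ => ?_) bot_le
  have hside : (0 : ℝ) < (ε : ℝ) ^ α⁻¹ := by positivity
  calc hausdorffContent n α ∅
      ≤ ENNReal.ofReal ((ε : ℝ) ^ α⁻¹) ^ α :=
        hausdorffContent_le_of_subset_cube hα (c := 0) hside (empty_subset _)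
    _ = 0 + ε := by
        rw [← ENNReal.ofReal_rpow_of_pos (NNReal.coe_pos.2 hε), ← ENNReal.rpow_mul,
          inv_mul_cancel₀ hα.ne', ENNReal.rpow_one, ENNReal.ofReal_coe_nnreal, zero_add]

lemma lintegral_indicator_cube (n : ℕ) (c c' : Fin n → ℝ) (h h' : ℝ) :
    ∫⁻ y in Cube n c' h', ENNReal.ofReal |(Cube n c h).indicator (fun _ => (1 : ℝ)) y|
      = volume (Cube n c h ∩ Cube n c' h') := by
  have hind : (fun y => ENNReal.ofReal |(Cube n c h).indicator (fun _ => (1 : ℝ)) y|)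
      = (Cube n c h).indicator 1 := by
    ext y; by_cases hy : y ∈ Cube n c h <;> simp [hy]
  rw [hind, lintegral_indicator_one (measurableSet_cube n c h),
    Measure.restrict_apply (measurableSet_cube n c h)]

lemma maximalFn_indicator_cube_le_one (n : ℕ) (c : Fin n → ℝ) (h : ℝ) (x : Fin n → ℝ) :
    maximalFn n ((Cube n c h).indicator fun _ => (1 : ℝ)) x ≤ 1 := by
  refine iSup₂_le fun c' h' => iSup₂_le fun hh' _ => ENNReal.div_le_of_le_mul ?_
  rw [lintegral_indicator_cube, one_mul, ← volume_cube n c' hh'.le]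
  exact measure_mono inter_subset_right

lemma lt_mul_rpow_neg_inv_of_mul_pow_lt {n : ℕ} (hn : n ≠ 0) {s h h' : ℝ} (hs : 0 < s)
    (hh : 0 ≤ h) (hlt : s * h' ^ n < h ^ n) :
    h' < h * s ^ (-(n : ℝ)⁻¹) := by
  have hpow : (h * s ^ (-(n : ℝ)⁻¹)) ^ n = h ^ n / s := by
    rw [mul_pow, ← Real.rpow_natCast (s ^ _), ← Real.rpow_mul hs.le,
      neg_mul, inv_mul_cancel₀ (Nat.cast_ne_zero.2 hn), Real.rpow_neg_one, div_eq_mul_inv]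
  refine lt_of_pow_lt_pow_left₀ n (by positivity) ?_
  rw [hpow, lt_div_iff₀ hs, mul_comm]
  exact hlt

lemma setOf_lt_maximalFn_indicator_cube_subset {n : ℕ} (c : Fin n → ℝ) {h s : ℝ} (hh : 0 < h)
    (hs : 0 < s) :
    {y | ENNReal.ofReal s < maximalFn n ((Cube n c h).indicator fun _ => (1 : ℝ)) y}
      ⊆ Cube n (fun i => c i - h * s ^ (-(n : ℝ)⁻¹)) (h + 2 * (h * s ^ (-(n : ℝ)⁻¹))) := by
  intro y hy
  simp only [maximalFn, lt_iSup_iff] at hy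
  obtain ⟨c', h', hh', hyR, hlt⟩ := hy
  rw [lintegral_indicator_cube,
    ENNReal.lt_div_iff_mul_lt (Or.inl (by positivity)) (Or.inl ENNReal.ofReal_ne_top)] at hlt
  have hmeets : (Cube n c h ∩ Cube n c' h').Nonempty :=
    nonempty_of_measure_ne_zero (ne_bot_of_gt hlt)
  obtain ⟨z, hzQ, hzR⟩ := hmeets
  have hvol : s * h' ^ n < h ^ n := by
    have := hlt.trans_le ((measure_mono inter_subset_left).trans (volume_cube n c hh.le).le)
    rwa [← ENNReal.ofReal_mul hs.le, ENNReal.ofReal_lt_ofReal_iff (by positivity)] at this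
  intro i
  have hside := lt_mul_rpow_neg_inv_of_mul_pow_lt (Fin.pos i).ne' hs hh.le hvol
  constructor <;> linarith [hyR i, hzQ i, hzR i]

lemma lintegral_Ioo_zero_one_rpow_neg {β : ℝ} (hβ : β < 1) :
    ∫⁻ t in Ioo (0 : ℝ) 1, ENNReal.ofReal t ^ (-β) = ENNReal.ofReal (1 - β)⁻¹ := by
  have hint : IntegrableOn (fun t : ℝ => t ^ (-β)) (Ioo 0 1) :=
    (intervalIntegral.integrableOn_Ioo_rpow_iff one_pos).2 (by linarith)
  rw [setLIntegral_congr_fun measurableSet_Ioo fun t ht => ENNReal.ofReal_rpow_of_pos ht.1,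
    ← ofReal_integral_eq_lintegral_ofReal hint
      ((ae_restrict_iff' measurableSet_Ioo).2
        (ae_of_all _ fun t ht => Real.rpow_nonneg ht.1.le _)),
    ← integral_Ioc_eq_integral_Ioo, ← intervalIntegral.integral_of_le zero_le_one,
    integral_rpow (Or.inl (by linarith)), Real.zero_rpow (by linarith), Real.one_rpow]
  congr 1
  ring

lemma choquetE_le_of_le_one {n : ℕ} {α β : ℝ} (hα : 0 < α) (hβ : β < 1)
    {φ : (Fin n → ℝ) → ℝ≥0∞} (hφ : ∀ x, φ x ≤ 1) {A : ℝ≥0∞}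
    (hlevel : ∀ t ∈ Ioo (0 : ℝ) 1,
      hausdorffContent n α {y | ENNReal.ofReal t < φ y} ≤ A * ENNReal.ofReal t ^ (-β)) :
    choquetE n α φ ≤ A * ENNReal.ofReal (1 - β)⁻¹ := by
  have hpointwise : ∀ t ∈ Ioi (0 : ℝ), hausdorffContent n α {y | ENNReal.ofReal t < φ y}
      ≤ (Ioo 0 1).indicator (fun t => A * ENNReal.ofReal t ^ (-β)) t := by
    intro t ht
    rcases lt_or_ge t 1 with ht1 | ht1
    · rw [indicator_of_mem (show t ∈ Ioo 0 1 from ⟨ht, ht1⟩)]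
      exact hlevel t ⟨ht, ht1⟩
    · have hempty : {y | ENNReal.ofReal t < φ y} = ∅ :=
        eq_empty_of_forall_notMem fun y hy =>
          (hy.trans_le (hφ y)).not_ge (ENNReal.one_le_ofReal.2 ht1)
      rw [hempty, hausdorffContent_empty n hα]
      exact zero_le
  calc choquetE n α φ
      ≤ ∫⁻ t in Ioi 0, (Ioo 0 1).indicator (fun t => A * ENNReal.ofReal t ^ (-β)) t :=
        setLIntegral_mono' measurableSet_Ioi hpointwise
    _ = ∫⁻ t in Ioo 0 1, A * ENNReal.ofReal t ^ (-β) := by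
        rw [lintegral_indicator measurableSet_Ioo, Measure.restrict_restrict measurableSet_Ioo,
          inter_eq_left.2 Ioo_subset_Ioi_self]
    _ = A * ENNReal.ofReal (1 - β)⁻¹ := by
        rw [lintegral_const_mul A (by fun_prop), lintegral_Ioo_zero_one_rpow_neg hβ]

lemma hausdorffContent_setOf_lt_maximalFn_indicator_cube_rpow_le {n : ℕ} {α p t h : ℝ}
    (hα : 0 < α) (hp : 0 < p) (c : Fin n → ℝ) (hh : 0 < h) (ht : t ∈ Ioo (0 : ℝ) 1) :
    hausdorffContent n α
        {y | ENNReal.ofReal t < maximalFn n ((Cube n c h).indicator fun _ => (1 : ℝ)) y ^ p}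
      ≤ ENNReal.ofReal (3 * h) ^ α * ENNReal.ofReal t ^ (-(α / n / p)) := by
  set M := maximalFn n ((Cube n c h).indicator fun _ => (1 : ℝ))
  set s := t ^ p⁻¹
  set u := s ^ (-(n : ℝ)⁻¹)
  have hs : 0 < s := Real.rpow_pos_of_pos ht.1 _
  have hu : 1 ≤ u := Real.one_le_rpow_of_pos_of_le_one_of_nonpos hs
    (Real.rpow_le_one ht.1.le ht.2.le (by positivity)) (by simp)
  have hlevel : {y | ENNReal.ofReal t < M y ^ p} = {y | ENNReal.ofReal s < M y} := by
    have : ENNReal.ofReal t = ENNReal.ofReal s ^ p := by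
      rw [ENNReal.ofReal_rpow_of_pos hs, ← Real.rpow_mul ht.1.le, inv_mul_cancel₀ hp.ne',
        Real.rpow_one]
    simp only [this, ENNReal.rpow_lt_rpow_iff hp]
  calc _ ≤ ENNReal.ofReal (h + 2 * (h * u)) ^ α := by
        rw [hlevel]
        exact hausdorffContent_le_of_subset_cube hα (by positivity)
          (setOf_lt_maximalFn_indicator_cube_subset c hh hs)
    _ ≤ ENNReal.ofReal (3 * h * u) ^ α := by gcongr; nlinarith
    _ = ENNReal.ofReal (3 * h) ^ α * ENNReal.ofReal t ^ (-(α / n / p)) := by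
        rw [ENNReal.ofReal_mul (by positivity), ENNReal.mul_rpow_of_nonneg _ _ hα.le,
          ENNReal.ofReal_rpow_of_pos (by positivity : 0 < u), ENNReal.ofReal_rpow_of_pos ht.1,
          ← Real.rpow_mul hs.le, ← Real.rpow_mul ht.1.le]
        congr 3
        ring

theorem choquet_maximal_indicator_general (n : ℕ) (α p : ℝ) (hα : 0 < α)
    (hp : α / n < p) :
    ∃ C : ℝ≥0∞, 0 < C ∧ C ≠ ⊤ ∧ ∀ (c : Fin n → ℝ) (h : ℝ), 0 < h →
      choquetE n α
          (fun x => maximalFn n ((Cube n c h).indicator fun _ => (1:ℝ)) x ^ p)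
        ≤ C * ENNReal.ofReal h ^ α := by
  have hp0 : 0 < p := (div_nonneg hα.le n.cast_nonneg).trans_lt hp
  have hβ : α / n / p < 1 := (div_lt_one hp0).2 hp
  refine ⟨ENNReal.ofReal 3 ^ α * ENNReal.ofReal (1 - α / n / p)⁻¹,
    ENNReal.mul_pos (ENNReal.rpow_pos (by norm_num) ENNReal.ofReal_ne_top).ne'
      (ENNReal.ofReal_pos.2 (inv_pos.2 (sub_pos.2 hβ))).ne',
    ENNReal.mul_ne_top (ENNReal.rpow_ne_top_of_nonneg hα.le ENNReal.ofReal_ne_top)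
      ENNReal.ofReal_ne_top, ?_⟩
  intro c h hh
  calc _ ≤ ENNReal.ofReal (3 * h) ^ α * ENNReal.ofReal (1 - α / n / p)⁻¹ :=
        choquetE_le_of_le_one hα hβ
          (fun x => ENNReal.rpow_le_one (maximalFn_indicator_cube_le_one n c h x) hp0.le)
          fun t ht => hausdorffContent_setOf_lt_maximalFn_indicator_cube_rpow_le hα hp0 c hh ht
    _ = _ := by
        rw [ENNReal.ofReal_mul (by norm_num), ENNReal.mul_rpow_of_nonneg _ _ hα.le]
        ring

/-- Orobitg–Verdera: for `0 < α < n` and `p > α/n`,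
`∫ (M 1_Q)^p dH^α ≤ C l(Q)^α` with `C = C(α,n,p)`. -/
theorem choquet_maximal_indicator (n : ℕ) (α p : ℝ) (hα : 0 < α) (hαn : α < n)
    (hp : α / n < p) :
    ∃ C : ℝ≥0∞, 0 < C ∧ C ≠ ⊤ ∧ ∀ (c : Fin n → ℝ) (h : ℝ), 0 < h →
      choquetE n α
          (fun x => maximalFn n ((Cube n c h).indicator fun _ => (1:ℝ)) x ^ p)
        ≤ C * ENNReal.ofReal h ^ α :=
  choquet_maximal_indicator_general n α p hα hp
end
end
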